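/- Let G be a finite group, p a prime, and P a Sylow p-subgroup of G. Then |𝔘_p(G)|^{|P|} · ∏_{x ∈ P} λ_G(x) ≥ |P|^{|P|} · n_p(G)^{|P|}. (This expresses that the p-Frobenius ratio |𝔘_p(G)|/|P| is at least the geometric mean of the integers n_p(G)/λ_G(x) for x ∈ P.) -/
import Mathlib

open Subgroup

/-- `λ_G(x)`: the number of Sylow `p`-subgroups of `G` containing `x`. -/
noncomputable def sylCount (p : ℕ) {G : Type*} [Group G] (x : G) : ℕ :=
  Nat.card {Q : Sylow p G // x ∈ Q}

section Aux

variable {G : Type*} [Group G] {p : ℕ}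

lemma mem_smul_sylow {Q : Sylow p G} {g a : G} : a ∈ g • Q ↔ g⁻¹ * a * g ∈ Q := by
  rw [← SetLike.mem_coe, Sylow.coe_smul, Set.mem_smul_set_iff_inv_smul_mem]
  simp [MulAut.smul_def, mul_assoc]

lemma sylCount_conj (g x : G) : sylCount p (g * x * g⁻¹) = sylCount p x := by
  refine (Nat.card_congr (Equiv.subtypeEquiv (MulAction.toPerm g : Equiv.Perm (Sylow p G))
    fun Q => ?_)).symm
  show x ∈ Q ↔ g * x * g⁻¹ ∈ g • Q
  rw [mem_smul_sylow]
  group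

end Aux

/-- discrete AM-GM -/
lemma prod_le_div_card_pow {ι : Type*} (s : Finset ι) (z : ι → ℝ) (hz : ∀ i ∈ s, 0 ≤ z i) :
    ∏ i ∈ s, z i ≤ ((∑ i ∈ s, z i) / s.card) ^ s.card := by
  rcases s.eq_empty_or_nonempty with h | h
  · simp [h]
  · have hk : 0 < (s.card : ℝ) := by exact_mod_cast Finset.card_pos.mpr h
    have h1 := Real.geom_mean_le_arith_mean_weighted s (fun _ => (s.card : ℝ)⁻¹) z
      (fun i _ => by positivity)
      (by rw [Finset.sum_const, nsmul_eq_mul, mul_inv_cancel₀ hk.ne']) hz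
    have h2 : ∑ i ∈ s, (s.card : ℝ)⁻¹ * z i = (∑ i ∈ s, z i) / s.card := by
      rw [← Finset.mul_sum]; ring
    rw [h2] at h1
    have h3 : (∏ i ∈ s, z i ^ ((s.card : ℝ)⁻¹)) ^ s.card = ∏ i ∈ s, z i := by
      rw [← Finset.prod_pow]
      refine Finset.prod_congr rfl fun i hi => ?_
      rw [← Real.rpow_natCast (z i ^ ((s.card : ℝ)⁻¹)), ← Real.rpow_mul (hz i hi),
        inv_mul_cancel₀ hk.ne', Real.rpow_one]
    calc ∏ i ∈ s, z i = (∏ i ∈ s, z i ^ ((s.card : ℝ)⁻¹)) ^ s.card := h3.symm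
      _ ≤ ((∑ i ∈ s, z i) / s.card) ^ s.card :=
        pow_le_pow_left₀ (Finset.prod_nonneg fun i hi => Real.rpow_nonneg (hz i hi) _) h1 _

/-- The `p`-Frobenius ratio `|𝔘_p(G)|/|P|` is at least the geometric mean of the
integers `n_p(G)/λ_G(x)` for `x ∈ P`:
`|𝔘_p(G)|^{|P|} · ∏_{x ∈ P} λ_G(x) ≥ |P|^{|P|} · n_p(G)^{|P|}`. -/
theorem frobenius_ratio_ge_geometric_mean {G : Type*} [Group G] [Fintype G]
    (p : ℕ) (hp : p.Prime) (P : Sylow p G) :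
    Nat.card (P : Subgroup G) ^ Nat.card (P : Subgroup G) *
        Nat.card (Sylow p G) ^ Nat.card (P : Subgroup G) ≤
      Nat.card {g : G | ∃ n : ℕ, orderOf g = p ^ n} ^ Nat.card (P : Subgroup G) *
        ∏ᶠ x ∈ ((P : Subgroup G) : Set G), sylCount p x := by
  classical
  haveI := Fact.mk hp
  set k := Nat.card (P : Subgroup G) with hk
  set n := Nat.card (Sylow p G) with hn
  set F : G → ℝ := fun x => (sylCount p x : ℝ)⁻¹ with hF
  set s : Finset G := Finset.univ.filter (fun x : G => x ∈ P) with hs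
  -- counting Sylows containing x
  have hcount : ∀ x : G, (Finset.univ.filter (fun Q : Sylow p G => x ∈ Q)).card
      = sylCount p x := by
    intro x
    rw [sylCount, Nat.card_eq_fintype_card, Fintype.card_subtype]
  have hzero : ∀ x : G, sylCount p x ≠ 0 ↔ ∃ Q : Sylow p G, x ∈ Q := by
    intro x
    rw [sylCount, Nat.card_eq_fintype_card, ← Nat.pos_iff_ne_zero, Fintype.card_pos_iff]
    exact ⟨fun ⟨⟨Q, h⟩⟩ => ⟨Q, h⟩, fun ⟨Q, h⟩ => ⟨⟨Q, h⟩⟩⟩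
  -- the set of p-elements is the union of the Sylow subgroups
  have hU : {g : G | ∃ n : ℕ, orderOf g = p ^ n} = {g : G | ∃ Q : Sylow p G, g ∈ Q} := by
    ext g
    constructor
    · rintro ⟨m, hm⟩
      have hpg : IsPGroup p (Subgroup.zpowers g) := by
        intro x
        refine ⟨m, ?_⟩
        have h1 : orderOf (x : G) ∣ orderOf g := orderOf_dvd_of_mem_zpowers x.2
        have h2 : (x : G) ^ p ^ m = 1 := orderOf_dvd_iff_pow_eq_one.mp (hm ▸ h1)
        exact Subtype.ext (by simpa using h2)
      obtain ⟨Q, hQ⟩ := hpg.exists_le_sylow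
      exact ⟨Q, hQ (Subgroup.mem_zpowers g)⟩
    · rintro ⟨Q, hQ⟩
      obtain ⟨m, hm⟩ := (IsPGroup.iff_orderOf.mp Q.isPGroup') ⟨g, hQ⟩
      refine ⟨m, ?_⟩
      rwa [Subgroup.orderOf_mk] at hm
  have hUcard : Nat.card {g : G | ∃ n : ℕ, orderOf g = p ^ n}
      = (Finset.univ.filter (fun g : G => ∃ Q : Sylow p G, g ∈ Q)).card := by
    rw [hU, Set.coe_setOf, Nat.card_eq_fintype_card, Fintype.card_subtype]
  set U : ℕ := (Finset.univ.filter (fun g : G => ∃ Q : Sylow p G, g ∈ Q)).card with hUdef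
  -- the inner sum is independent of the Sylow subgroup
  have hinv : ∀ Q R : Sylow p G,
      ∑ x ∈ Finset.univ.filter (fun x : G => x ∈ Q), F x
        = ∑ x ∈ Finset.univ.filter (fun x : G => x ∈ R), F x := by
    intro Q R
    obtain ⟨g, hg⟩ := MulAction.exists_smul_eq G Q R
    refine Finset.sum_nbij' (fun x => g * x * g⁻¹) (fun y => g⁻¹ * y * g) ?_ ?_ ?_ ?_ ?_
    · intro a ha
      simp only [Finset.mem_filter, Finset.mem_univ, true_and] at ha ⊢
      rw [← hg, mem_smul_sylow]
      have h : g⁻¹ * (g * a * g⁻¹) * g = a := by group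
      rw [h]; exact ha
    · intro b hb
      simp only [Finset.mem_filter, Finset.mem_univ, true_and] at hb ⊢
      rw [← hg] at hb
      exact mem_smul_sylow.mp hb
    · intro a _; group
    · intro b _; group
    · intro a _
      simp only [hF]
      rw [sylCount_conj]
  -- double counting
  have hdc : (n : ℝ) * ∑ x ∈ s, F x = (U : ℝ) := by
    calc (n : ℝ) * ∑ x ∈ s, F x
        = ∑ Q : Sylow p G, ∑ x ∈ Finset.univ.filter (fun x : G => x ∈ Q), F x := by
          rw [Finset.sum_congr rfl (fun Q _ => hinv Q P), Finset.sum_const,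
            Finset.card_univ, nsmul_eq_mul, hn, Nat.card_eq_fintype_card, hs]
      _ = ∑ Q : Sylow p G, ∑ x : G, if x ∈ Q then F x else 0 := by
          simp [Finset.sum_filter]
      _ = ∑ x : G, ∑ Q : Sylow p G, if x ∈ Q then F x else 0 := Finset.sum_comm
      _ = ∑ x : G, (sylCount p x : ℝ) * F x := by
          refine Finset.sum_congr rfl fun x _ => ?_
          rw [← Finset.sum_filter, Finset.sum_const, ← hcount x, nsmul_eq_mul]
      _ = ∑ x : G, (if ∃ Q : Sylow p G, x ∈ Q then (1 : ℝ) else 0) := by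
          refine Finset.sum_congr rfl fun x _ => ?_
          by_cases hx : ∃ Q : Sylow p G, x ∈ Q
          · rw [if_pos hx]
            simp only [hF]
            exact mul_inv_cancel₀ (by exact_mod_cast (hzero x).mpr hx)
          · rw [if_neg hx]
            have h0 : sylCount p x = 0 := by
              by_contra h
              exact hx ((hzero x).mp h)
            rw [h0]
            simp
      _ = (U : ℝ) := by rw [Finset.sum_boole, hUdef]
  -- positivity facts
  have hkpos : 0 < k := hk ▸ Nat.card_pos
  have hnpos : 0 < n := hn ▸ Nat.card_pos
  have hcard_s : s.card = k := by
    rw [hs, hk, Nat.card_eq_fintype_card, Fintype.card_subtype]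
    rfl
  have hzpos : ∀ x ∈ s, 0 < (sylCount p x : ℝ) := by
    intro x hx
    have := (hzero x).mpr ⟨P, (Finset.mem_filter.mp hx).2⟩
    exact_mod_cast Nat.pos_of_ne_zero this
  -- AM-GM
  have hgm := prod_le_div_card_pow s (fun x => (n : ℝ) / sylCount p x)
    (fun x hx => div_nonneg (by positivity) (hzpos x hx).le)
  have hsum : ∑ x ∈ s, (n : ℝ) / sylCount p x = (U : ℝ) := by
    rw [← hdc, Finset.mul_sum]
    exact Finset.sum_congr rfl fun x _ => by rw [hF, div_eq_mul_inv]
  have hprod : ∏ x ∈ s, ((n : ℝ) / sylCount p x)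
      = (n : ℝ) ^ k / ∏ x ∈ s, (sylCount p x : ℝ) := by
    rw [Finset.prod_div_distrib, Finset.prod_const, hcard_s]
  have hΛpos : 0 < ∏ x ∈ s, (sylCount p x : ℝ) := Finset.prod_pos hzpos
  rw [hsum, hcard_s, hprod] at hgm
  have hgm2 : (k : ℝ) ^ k * (n : ℝ) ^ k ≤ (U : ℝ) ^ k * ∏ x ∈ s, (sylCount p x : ℝ) := by
    rw [div_pow] at hgm
    have hkR : (0 : ℝ) < (k : ℝ) ^ k := by positivity
    rw [div_le_div_iff₀ hΛpos hkR] at hgm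
    calc (k : ℝ) ^ k * (n : ℝ) ^ k = (n : ℝ) ^ k * (k : ℝ) ^ k := by ring
      _ ≤ (U : ℝ) ^ k * ∏ x ∈ s, (sylCount p x : ℝ) := hgm
  -- convert the finprod and conclude
  have hfin : ∏ᶠ x ∈ ((P : Subgroup G) : Set G), sylCount p x = ∏ x ∈ s, sylCount p x := by
    have hset : ((P : Subgroup G) : Set G) = ↑s := by
      ext x
      simp only [hs, Finset.coe_filter, Finset.mem_univ, true_and, SetLike.mem_coe,
        Set.mem_setOf_eq]
      exact Iff.rfl
    rw [hset, finprod_mem_coe_finset]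
  rw [hfin, hUcard]
  exact_mod_cast hgm2
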